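/- arXiv:2009.03719 — 5 statements merged into one kernel-verified Lean document; each statement's English description precedes it below -/
import Mathlib

section
/- Suppose real numbers p₁, p₂ ∈ (1, 2) and v₁, v₂ satisfy (p₁ + p₂ - 1)/(p₁ - 1) = 2·exp(p₂ - v₂) and (p₁ + p₂ - 1)/(p₂ - 1) = 2·exp(p₁ - v₁). If v₁ > v₂, then p₁ < p₂. -/
lemma eta_strictMono : StrictMonoOn (fun p : ℝ => (p - 1) * Real.exp (-p)) (Set.Icc 1 2) := by
  have h : ∀ p : ℝ, HasDerivAt (fun p : ℝ => (p - 1) * Real.exp (-p))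
      ((2 - p) * Real.exp (-p)) p := by
    intro p
    have h1 : HasDerivAt (fun p : ℝ => p - 1) 1 p := (hasDerivAt_id p).sub_const 1
    have h2 : HasDerivAt (fun p : ℝ => Real.exp (-p)) (-Real.exp (-p)) p := by
      simpa [Function.comp_def] using (Real.hasDerivAt_exp (-p)).comp p ((hasDerivAt_id p).neg)
    have : HasDerivAt (fun p : ℝ => (p - 1) * Real.exp (-p))
        (1 * Real.exp (-p) + (p - 1) * -Real.exp (-p)) p := h1.mul h2
    convert this using 1
    ring
  apply strictMonoOn_of_deriv_pos (convex_Icc 1 2)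
  · exact (Continuous.mul (by continuity) (by continuity)).continuousOn
  · intro x hx
    rw [interior_Icc] at hx
    rw [(h x).deriv]
    have := Real.exp_pos (-x)
    nlinarith [hx.1, hx.2]

/-- If `p₁, p₂ ∈ (1, 2)` satisfy the two first-order conditions of the
two-product one-page pricing problem and `v₁ > v₂`, then `p₁ < p₂`. -/
theorem stmt_5 (p₁ p₂ v₁ v₂ : ℝ)
    (hp₁ : p₁ ∈ Set.Ioo (1 : ℝ) 2) (hp₂ : p₂ ∈ Set.Ioo (1 : ℝ) 2)
    (hfoc1 : (p₁ + p₂ - 1) / (p₁ - 1) = 2 * Real.exp (p₂ - v₂))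
    (hfoc2 : (p₁ + p₂ - 1) / (p₂ - 1) = 2 * Real.exp (p₁ - v₁))
    (hv : v₂ < v₁) : p₁ < p₂ := by
  obtain ⟨h11, h12⟩ := hp₁
  obtain ⟨h21, h22⟩ := hp₂
  have hne1 : p₁ - 1 ≠ 0 := by linarith
  have hne2 : p₂ - 1 ≠ 0 := by linarith
  have e1 : p₁ + p₂ - 1 = 2 * Real.exp (p₂ - v₂) * (p₁ - 1) := by
    field_simp at hfoc1; linarith [hfoc1]
  have e2 : p₁ + p₂ - 1 = 2 * Real.exp (p₁ - v₁) * (p₂ - 1) := by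
    field_simp at hfoc2; linarith [hfoc2]
  have key : Real.exp (p₂ - v₂) * (p₁ - 1) = Real.exp (p₁ - v₁) * (p₂ - 1) := by
    linarith
  -- multiply both sides by exp(-(p₁+p₂)+v₂)
  have hmul : (p₁ - 1) * Real.exp (-p₁) = (p₂ - 1) * Real.exp (-p₂) * Real.exp (v₂ - v₁) := by
    have := congrArg (fun x => x * Real.exp (-(p₁ + p₂) + v₂)) key
    calc (p₁ - 1) * Real.exp (-p₁)
        = Real.exp (p₂ - v₂) * (p₁ - 1) * Real.exp (-(p₁ + p₂) + v₂) := by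
          rw [mul_right_comm, ← Real.exp_add]; ring_nf
      _ = Real.exp (p₁ - v₁) * (p₂ - 1) * Real.exp (-(p₁ + p₂) + v₂) := by rw [key]
      _ = (p₂ - 1) * Real.exp (-p₂) * Real.exp (v₂ - v₁) := by
          rw [mul_right_comm, ← Real.exp_add, mul_assoc, ← Real.exp_add]; ring_nf
  have hexp : Real.exp (v₂ - v₁) < 1 := Real.exp_lt_one_iff.mpr (by linarith)
  have hpos : 0 < (p₂ - 1) * Real.exp (-p₂) :=
    mul_pos (by linarith) (Real.exp_pos _)
  have hlt : (p₁ - 1) * Real.exp (-p₁) < (p₂ - 1) * Real.exp (-p₂) := by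
    rw [hmul]
    nlinarith
  have := eta_strictMono.lt_iff_lt (Set.mem_Icc.mpr ⟨le_of_lt h11, le_of_lt h12⟩)
      (Set.mem_Icc.mpr ⟨le_of_lt h21, le_of_lt h22⟩)
  exact this.mp hlt
end

section
/- Define the recursion V_N = (1/α)·exp(α(v_N - c_N) - 1) and V_i = (1/α)·exp(α(v_i - c_i) - 1)·exp(-2αρ·V_{i+1}) + ρ·V_{i+1} for i = N-1,...,1, where α > 0, ρ ∈ [0,1], and vᵢ ≤ cᵢ for all i. Then each V_i is nonnegative and weakly increasing in ρ. -/
lemma key_mono (a A x y : ℝ) (ha : 0 < a) (hA : 0 ≤ A) (haA : a * A ≤ 1)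
    (hx : 0 ≤ x) (hxy : x ≤ y) :
    A * Real.exp (-(a * x)) + x ≤ A * Real.exp (-(a * y)) + y := by
  have h1 : 1 + (-(a * (y - x))) ≤ Real.exp (-(a * (y - x))) := by
    linarith [Real.add_one_le_exp (-(a * (y - x)))]
  have h2 : Real.exp (-(a * y)) = Real.exp (-(a * x)) * Real.exp (-(a * (y - x))) := by
    rw [← Real.exp_add]; ring_nf
  have h3 : Real.exp (-(a * x)) ≤ 1 := Real.exp_le_one_iff.mpr (by nlinarith)
  have h4 : 0 < Real.exp (-(a * x)) := Real.exp_pos _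
  have h5 : Real.exp (-(a * x)) * (1 - a * (y - x)) ≤ Real.exp (-(a * y)) := by
    rw [h2]; nlinarith
  have h6 : A * (Real.exp (-(a * x)) * (1 - a * (y - x))) ≤ A * Real.exp (-(a * y)) :=
    mul_le_mul_of_nonneg_left h5 hA
  have h7 : a * A * Real.exp (-(a * x)) ≤ 1 := by nlinarith
  have h8 : a * A * Real.exp (-(a * x)) * (y - x) ≤ y - x := by nlinarith
  nlinarith [h6, h8]

/-- The backward recursion for the seller's stage value in the exponential
virtual-assistant model: each `V_i(ρ)` is nonnegative and weakly increasing
in the patience parameter `ρ ∈ [0,1]`. -/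
theorem stmt_7 (N : ℕ) (α : ℝ) (v c : ℕ → ℝ) (hα : 0 < α)
    (hvc : ∀ i, v i ≤ c i)
    (V : ℝ → ℕ → ℝ)
    (hVN : ∀ ρ ∈ Set.Icc (0 : ℝ) 1,
      V ρ N = (1 / α) * Real.exp (α * (v N - c N) - 1))
    (hVrec : ∀ ρ ∈ Set.Icc (0 : ℝ) 1, ∀ i < N,
      V ρ i = (1 / α) * Real.exp (α * (v i - c i) - 1) *
          Real.exp (-2 * α * ρ * V ρ (i + 1)) + ρ * V ρ (i + 1)) :
    ∀ i ≤ N, (∀ ρ ∈ Set.Icc (0 : ℝ) 1, 0 ≤ V ρ i) ∧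
      (∀ ρ ∈ Set.Icc (0 : ℝ) 1, ∀ ρ' ∈ Set.Icc (0 : ℝ) 1,
        ρ ≤ ρ' → V ρ i ≤ V ρ' i) := by
  -- reduce to induction on n = N - i
  suffices H : ∀ n i, N = i + n → (∀ ρ ∈ Set.Icc (0 : ℝ) 1, 0 ≤ V ρ i) ∧
      (∀ ρ ∈ Set.Icc (0 : ℝ) 1, ∀ ρ' ∈ Set.Icc (0 : ℝ) 1,
        ρ ≤ ρ' → V ρ i ≤ V ρ' i) by
    intro i hi
    exact H (N - i) i (by omega)
  intro n
  induction n with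
  | zero =>
      intro i hi
      have hiN : i = N := by omega
      subst hiN
      constructor
      · intro ρ hρ
        rw [hVN ρ hρ]
        positivity
      · intro ρ hρ ρ' hρ' _
        rw [hVN ρ hρ, hVN ρ' hρ']
  | succ n ih =>
      intro i hi
      have hiN : i < N := by omega
      have hnext := ih (i + 1) (by omega)
      have hApos : 0 < (1 / α) * Real.exp (α * (v i - c i) - 1) := by positivity
      constructor
      · intro ρ hρ
        rw [hVrec ρ hρ i hiN]
        have h1 := hnext.1 ρ hρ
        have h2 := Real.exp_pos (-2 * α * ρ * V ρ (i + 1))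
        nlinarith [hρ.1]
      · intro ρ hρ ρ' hρ' hle
        rw [hVrec ρ hρ i hiN, hVrec ρ' hρ' i hiN]
        set A := (1 / α) * Real.exp (α * (v i - c i) - 1) with hA
        have hVρ := hnext.1 ρ hρ
        have hVρ' := hnext.1 ρ' hρ'
        have hmono := hnext.2 ρ hρ ρ' hρ' hle
        have hxy : ρ * V ρ (i + 1) ≤ ρ' * V ρ' (i + 1) := by
          have : ρ * V ρ (i + 1) ≤ ρ' * V ρ (i + 1) :=
            mul_le_mul_of_nonneg_right hle hVρ
          have : ρ' * V ρ (i + 1) ≤ ρ' * V ρ' (i + 1) :=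
            mul_le_mul_of_nonneg_left hmono hρ'.1
          linarith
        have hx0 : 0 ≤ ρ * V ρ (i + 1) := mul_nonneg hρ.1 hVρ
        have haA : (2 * α) * A ≤ 1 := by
          have h2e : (2 : ℝ) ≤ Real.exp 1 := by
            have := Real.add_one_le_exp (1 : ℝ); linarith
          have hexp : Real.exp (α * (v i - c i) - 1) ≤ Real.exp (-1) := by
            apply Real.exp_le_exp.mpr
            nlinarith [hvc i]
          have he : 0 < Real.exp 1 := Real.exp_pos 1
          have hneg : Real.exp (-1 : ℝ) ≤ 1 / 2 := by
            rw [Real.exp_neg]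
            have h9 : (Real.exp 1)⁻¹ ≤ (2 : ℝ)⁻¹ := by
              apply inv_anti₀ (by norm_num) h2e
            simpa using h9
          have heq : (2 * α) * ((1 / α) * Real.exp (α * (v i - c i) - 1))
              = 2 * Real.exp (α * (v i - c i) - 1) := by field_simp
          rw [hA, heq]
          linarith
        have key := key_mono (2 * α) A (ρ * V ρ (i + 1)) (ρ' * V ρ' (i + 1))
          (by linarith) hApos.le haA hx0 hxy
        have e1 : -2 * α * ρ * V ρ (i + 1) = -((2 * α) * (ρ * V ρ (i + 1))) := by ring
        have e2 : -2 * α * ρ' * V ρ' (i + 1) = -((2 * α) * (ρ' * V ρ' (i + 1))) := by ring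
        rw [e1, e2]
        linarith
end

section
/- Fix V̄ ≥ 0, α > 0 and M₁, M₂ with 0 < M₂ < M₁ ≤ 1. Define W(A, B) = V̄ + (A/(αe))·e^{-2αV̄} + (B/(αe))·exp(-2αV̄ - (2/e)·e^{-2αV̄}·A). Then W(M₁, M₂) > W(M₂, M₁); that is, placing the product with smaller M first yields strictly higher two-stage profit. -/
/-- Key lemma: for `0 < a < b` and `k > 0`, `b·(1 - e^{-ka}) > a·(1 - e^{-kb})`,
i.e. `(1 - e^{-kx})/x` is strictly decreasing. -/
lemma key_ineq (k a b : ℝ) (hk : 0 < k) (ha : 0 < a) (hab : a < b) :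
    b * (1 - Real.exp (-(k * a))) > a * (1 - Real.exp (-(k * b))) := by
  have hb : 0 < b := ha.trans hab
  have hx : -(k * b) ≠ (0 : ℝ) := by nlinarith
  have hw1 : 0 < a / b := div_pos ha hb
  have hw2 : 0 < 1 - a / b := by
    have : a / b < 1 := (div_lt_one hb).mpr hab
    linarith
  have hconv := strictConvexOn_exp.2 (Set.mem_univ (-(k * b))) (Set.mem_univ (0 : ℝ))
    hx hw1 hw2 (by ring)
  simp only [smul_eq_mul, mul_zero, add_zero, Real.exp_zero, mul_one] at hconv
  have heq : a / b * -(k * b) = -(k * a) := by field_simp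
  rw [heq] at hconv
  have := mul_lt_mul_of_pos_left hconv hb
  have hbne : b ≠ 0 := ne_of_gt hb
  nlinarith [Real.exp_pos (-(k * b)), Real.exp_pos (-(k * a))]

/-- With `W(A,B) = Vbar + (A/(αe))·e^{-2αVbar} + (B/(αe))·exp(-2αVbar - (2/e)·e^{-2αVbar}·A)`
and `0 < M₂ < M₁ ≤ 1`, we have `W(M₁, M₂) > W(M₂, M₁)`: placing the product
with the smaller `M` first yields strictly higher two-stage profit. -/
theorem stmt_9 (Vbar α M₁ M₂ : ℝ) (hV : 0 ≤ Vbar) (hα : 0 < α)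
    (h0 : 0 < M₂) (h12 : M₂ < M₁) (h1 : M₁ ≤ 1) :
    (Vbar + (M₁ / (α * Real.exp 1)) * Real.exp (-2 * α * Vbar) +
        (M₂ / (α * Real.exp 1)) *
          Real.exp (-2 * α * Vbar - (2 / Real.exp 1) * Real.exp (-2 * α * Vbar) * M₁)) >
      (Vbar + (M₂ / (α * Real.exp 1)) * Real.exp (-2 * α * Vbar) +
        (M₁ / (α * Real.exp 1)) *
          Real.exp (-2 * α * Vbar - (2 / Real.exp 1) * Real.exp (-2 * α * Vbar) * M₂)) := by
  set E := Real.exp (-2 * α * Vbar) with hE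
  have hEpos : 0 < E := Real.exp_pos _
  set k := 2 / Real.exp 1 * E with hk
  have hkpos : 0 < k := by positivity
  have hrw : ∀ M : ℝ, Real.exp (-2 * α * Vbar - k * M) = E * Real.exp (-(k * M)) := by
    intro M
    rw [sub_eq_add_neg, Real.exp_add]
  rw [hrw M₁, hrw M₂]
  have hD : 0 < α * Real.exp 1 := by positivity
  have hkey := key_ineq k M₂ M₁ hkpos h0 h12
  have hfac : 0 < E / (α * Real.exp 1) := div_pos hEpos hD
  have hgoal : M₁ * (1 - Real.exp (-(k * M₂))) - M₂ * (1 - Real.exp (-(k * M₁))) > 0 := by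
    linarith
  have := mul_pos hfac hgoal
  have hexp : (M₁ / (α * Real.exp 1)) * E + (M₂ / (α * Real.exp 1)) * (E * Real.exp (-(k * M₁)))
      - ((M₂ / (α * Real.exp 1)) * E + (M₁ / (α * Real.exp 1)) * (E * Real.exp (-(k * M₂))))
      = E / (α * Real.exp 1) * (M₁ * (1 - Real.exp (-(k * M₂))) - M₂ * (1 - Real.exp (-(k * M₁)))) := by
    field_simp
    ring
  linarith [hexp ▸ this]
end

section
/- Let V : Perm × [0,1] → ℝ be such that the stage-i value satisfies V_i = (1/(αe))·exp(-2αρV_{i+1})·M_{σ(i)} + ρ·V_{i+1} with V_{N+1} = 0, where 0 < M_j ≤ 1 for all j and α > 0. Then ∂V_i/∂V_{i+1} = ρ·(1 - (2/e)·exp(-2αρV_{i+1})·M_{σ(i)}) > 0 for ρ > 0, so if σ maximizes V_1 then its tail sub-permutation (σ(i),...,σ(N)) maximizes V_i among orderings of the same tail products. -/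
/-- The stage value of a list of products in the virtual-assistant model:
`V_i = (1/(αe))·exp(-2αρ V_{i+1})·M_{σ(i)} + ρ·V_{i+1}`, with value `0`
after the last product. -/
noncomputable def stageVal (α ρ : ℝ) (M : ℕ → ℝ) : List ℕ → ℝ
  | [] => 0
  | j :: t =>
      (1 / (α * Real.exp 1)) * Real.exp (-2 * α * ρ * stageVal α ρ M t) * M j +
        ρ * stageVal α ρ M t

lemma stageVal_nonneg (α ρ : ℝ) (M : ℕ → ℝ) (hα : 0 < α) (hρ0 : 0 < ρ)
    (hM : ∀ j, 0 < M j ∧ M j ≤ 1) : ∀ l, 0 ≤ stageVal α ρ M l := by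
  intro l
  induction l with
  | nil => simp [stageVal]
  | cons j t ih =>
    have h1 : (0:ℝ) < 1 / (α * Real.exp 1) :=
      div_pos one_pos (mul_pos hα (Real.exp_pos 1))
    have := (hM j).1
    have := Real.exp_pos (-2 * α * ρ * stageVal α ρ M t)
    simp only [stageVal]
    positivity

lemma hasDeriv_aux (α ρ : ℝ) (M : ℕ → ℝ) (j : ℕ) (w : ℝ) (hα : 0 < α) :
    HasDerivAt (fun W : ℝ =>
        (1 / (α * Real.exp 1)) * Real.exp (-2 * α * ρ * W) * M j + ρ * W)
      (ρ * (1 - (2 / Real.exp 1) * Real.exp (-2 * α * ρ * w) * M j)) w := by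
  have h1 : HasDerivAt (fun W : ℝ => -2 * α * ρ * W) (-2 * α * ρ) w := by
    simpa using (hasDerivAt_id w).const_mul (-2 * α * ρ)
  have h2 : HasDerivAt (fun W : ℝ => Real.exp (-2 * α * ρ * W))
      (Real.exp (-2 * α * ρ * w) * (-2 * α * ρ)) w := h1.exp
  have h3 := ((h2.const_mul (1 / (α * Real.exp 1))).mul_const (M j)).add
    ((hasDerivAt_id w).const_mul ρ)
  refine h3.congr_deriv ?_
  have hαne : α ≠ 0 := ne_of_gt hα
  have hexp : Real.exp 1 ≠ 0 := (Real.exp_pos 1).ne'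
  field_simp
  ring

lemma deriv_pos (α ρ : ℝ) (M : ℕ → ℝ) (j : ℕ) (w : ℝ) (hα : 0 < α) (hρ0 : 0 < ρ)
    (hM : ∀ j, 0 < M j ∧ M j ≤ 1) (hw : 0 ≤ w) :
    0 < ρ * (1 - (2 / Real.exp 1) * Real.exp (-2 * α * ρ * w) * M j) := by
  apply mul_pos hρ0
  have hle : Real.exp (-2 * α * ρ * w) ≤ 1 := by
    apply Real.exp_le_one_iff.2
    have h0 : 0 ≤ α * ρ * w := by positivity
    nlinarith
  have hMj := hM j
  have he : (2:ℝ) < Real.exp 1 := by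
    have := Real.add_one_lt_exp (x := 1) one_ne_zero
    linarith
  have hepos := Real.exp_pos 1
  have h2e : (2:ℝ) / Real.exp 1 < 1 := (div_lt_one hepos).2 he
  have hexpos := Real.exp_pos (-2 * α * ρ * w)
  nlinarith [mul_pos hexpos hMj.1, mul_le_one₀ hle hMj.1.le hMj.2]

lemma F_strictMono (α ρ : ℝ) (M : ℕ → ℝ) (j : ℕ) (hα : 0 < α) (hρ0 : 0 < ρ)
    (hM : ∀ j, 0 < M j ∧ M j ≤ 1) :
    StrictMonoOn (fun W : ℝ =>
      (1 / (α * Real.exp 1)) * Real.exp (-2 * α * ρ * W) * M j + ρ * W)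
      (Set.Ici 0) := by
  apply strictMonoOn_of_deriv_pos (convex_Ici 0)
  · exact Continuous.continuousOn (by
      continuity)
  · intro x hx
    rw [interior_Ici] at hx
    rw [(hasDeriv_aux α ρ M j x hα).deriv]
    exact deriv_pos α ρ M j x hα hρ0 hM (le_of_lt hx)

/-- Since `∂V_i/∂V_{i+1} = ρ·(1 - (2/e)·exp(-2αρ V_{i+1})·M_{σ(i)}) > 0`
for `ρ > 0` (and `0 < M_j ≤ 1`), any ranking maximizing the total value also has
every tail sub-permutation optimal among orderings of the same tail products. -/
theorem stmt_14 (α ρ : ℝ) (M : ℕ → ℝ) (hα : 0 < α) (hρ0 : 0 < ρ) (hρ1 : ρ ≤ 1)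
    (hM : ∀ j, 0 < M j ∧ M j ≤ 1) :
    (∀ j : ℕ, ∀ w : ℝ, 0 ≤ w →
      HasDerivAt (fun W : ℝ =>
          (1 / (α * Real.exp 1)) * Real.exp (-2 * α * ρ * W) * M j + ρ * W)
        (ρ * (1 - (2 / Real.exp 1) * Real.exp (-2 * α * ρ * w) * M j)) w ∧
      0 < ρ * (1 - (2 / Real.exp 1) * Real.exp (-2 * α * ρ * w) * M j)) ∧
    (∀ front tail : List ℕ,
      (∀ l : List ℕ, l.Perm (front ++ tail) →
        stageVal α ρ M l ≤ stageVal α ρ M (front ++ tail)) →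
      (∀ t' : List ℕ, t'.Perm tail →
        stageVal α ρ M t' ≤ stageVal α ρ M tail)) := by
  constructor
  · intro j w hw
    exact ⟨hasDeriv_aux α ρ M j w hα, deriv_pos α ρ M j w hα hρ0 hM hw⟩
  · intro front tail hopt t' hperm
    by_contra hlt
    push_neg at hlt
    -- strict monotonicity along the front
    have key : ∀ f : List ℕ, ∀ a b : List ℕ, stageVal α ρ M a < stageVal α ρ M b →
        stageVal α ρ M (f ++ a) < stageVal α ρ M (f ++ b) := by
      intro f
      induction f with
      | nil => intro a b h; simpa using h
      | cons j f ih =>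
        intro a b h
        have h' := ih a b h
        have := F_strictMono α ρ M j hα hρ0 hM
          (stageVal_nonneg α ρ M hα hρ0 hM (f ++ a))
          (stageVal_nonneg α ρ M hα hρ0 hM (f ++ b)) h'
        simpa [stageVal] using this
    have h1 := key front tail t' hlt
    have h2 := hopt (front ++ t') (List.Perm.append_left front hperm)
    linarith
end

section
/- Under any fixed ranking in the exponential(α) virtual-assistant model with vᵢ ≤ cᵢ, the optimal price p*_i(ρ) = cᵢ + 1/α + ρ·V^p_{i+1}(ρ) of each product is weakly increasing in the patience parameter ρ ∈ [0,1]. -/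
/-- Key one-step inequality: the map `w ↦ (1/α)·exp(-α(2w+cv+1/α)) + w` is
monotone on `[0,∞)` when `cv ≥ 0`. -/
lemma step_mono_aux (α cv : ℝ) (hα : 0 < α) (hcv : 0 ≤ cv)
    {w1 w2 : ℝ} (hw1 : 0 ≤ w1) (h12 : w1 ≤ w2) :
    (1 / α) * Real.exp (-α * (2 * w1 + cv + 1 / α)) + w1 ≤
      (1 / α) * Real.exp (-α * (2 * w2 + cv + 1 / α)) + w2 := by
  set a1 := α * (2 * w1 + cv + 1 / α) with ha1
  set a2 := α * (2 * w2 + cv + 1 / α) with ha2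
  have hαinv : α * (1 / α) = 1 := by field_simp
  have h1 : (1 : ℝ) ≤ a1 := by
    have : (1 : ℝ) = α * (1 / α) := hαinv.symm
    rw [this, ha1]
    nlinarith
  have hdd : a2 - a1 = 2 * α * (w2 - w1) := by rw [ha1, ha2]; ring
  have hd0 : 0 ≤ a2 - a1 := by nlinarith
  -- 1 - exp(-(a2-a1)) ≤ a2 - a1
  have hexp1 : 1 - Real.exp (-(a2 - a1)) ≤ a2 - a1 := by
    have := Real.add_one_le_exp (-(a2 - a1))
    linarith
  -- exp(-a1) ≤ exp(-1) ≤ 1/2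
  have hea1 : Real.exp (-a1) ≤ Real.exp (-1) := Real.exp_le_exp.2 (by linarith)
  have hhalf : Real.exp (-1 : ℝ) ≤ 1 / 2 := by
    have h2 : (2 : ℝ) ≤ Real.exp 1 := by
      have := Real.add_one_le_exp (1 : ℝ); linarith
    have hpos : 0 < Real.exp (-1 : ℝ) := Real.exp_pos _
    have hmul : Real.exp (-1 : ℝ) * Real.exp 1 = 1 := by
      rw [← Real.exp_add]; norm_num
    nlinarith
  have hsplit : Real.exp (-a1) - Real.exp (-a2) =
      Real.exp (-a1) * (1 - Real.exp (-(a2 - a1))) := by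
    rw [mul_sub, mul_one, ← Real.exp_add]; ring_nf
  have hkey : Real.exp (-a1) - Real.exp (-a2) ≤ α * (w2 - w1) := by
    rw [hsplit]
    have h0 : 0 ≤ Real.exp (-a1) := (Real.exp_pos _).le
    calc Real.exp (-a1) * (1 - Real.exp (-(a2 - a1)))
        ≤ Real.exp (-a1) * (a2 - a1) := by
          apply mul_le_mul_of_nonneg_left hexp1 h0
      _ ≤ (1 / 2) * (a2 - a1) := by
          apply mul_le_mul_of_nonneg_right _ hd0
          linarith
      _ = α * (w2 - w1) := by rw [hdd]; ring
  have hne : -α * (2 * w1 + cv + 1 / α) = -a1 := by rw [ha1]; ring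
  have hne2 : -α * (2 * w2 + cv + 1 / α) = -a2 := by rw [ha2]; ring
  rw [hne, hne2]
  have hαinv' : 0 < 1 / α := by positivity
  have := mul_le_mul_of_nonneg_left hkey hαinv'.le
  have hcancel : (1 / α) * (α * (w2 - w1)) = w2 - w1 := by field_simp
  nlinarith [this]

/-- Backward induction: `V ρ j` is nonnegative and monotone in `ρ` on `[0,1]`. -/
lemma V_nonneg_mono (N : ℕ) (α : ℝ) (v c : ℕ → ℝ) (hα : 0 < α)
    (hvc : ∀ i, v i ≤ c i) (V : ℝ → ℕ → ℝ)
    (hVN : ∀ ρ ∈ Set.Icc (0 : ℝ) 1,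
      V ρ N = (1 / α) * Real.exp (α * (v N - c N) - 1))
    (hVrec : ∀ ρ ∈ Set.Icc (0 : ℝ) 1, ∀ i < N,
      V ρ i = (1 / α) *
          Real.exp (-α * (2 * ρ * V ρ (i + 1) + c i - v i + 1 / α)) +
        ρ * V ρ (i + 1)) :
    ∀ d j, N = j + d →
      (∀ ρ ∈ Set.Icc (0 : ℝ) 1, 0 ≤ V ρ j) ∧
        MonotoneOn (fun ρ => V ρ j) (Set.Icc (0 : ℝ) 1) := by
  intro d
  induction d with
  | zero =>
    intro j hj
    have hjN : j = N := by omega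
    subst hjN
    constructor
    · intro ρ hρ
      rw [hVN ρ hρ]
      positivity
    · intro ρ1 h1 ρ2 h2 h12
      simp only [hVN ρ1 h1, hVN ρ2 h2, le_refl]
  | succ d ih =>
    intro j hj
    have hjN : j < N := by omega
    obtain ⟨ihn, ihm⟩ := ih (j + 1) (by omega)
    have hw : ∀ ρ ∈ Set.Icc (0 : ℝ) 1, 0 ≤ ρ * V ρ (j + 1) := by
      intro ρ hρ
      exact mul_nonneg hρ.1 (ihn ρ hρ)
    constructor
    · intro ρ hρ
      rw [hVrec ρ hρ j hjN]
      have := hw ρ hρ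
      positivity
    · intro ρ1 h1 ρ2 h2 h12
      simp only
      rw [hVrec ρ1 h1 j hjN, hVrec ρ2 h2 j hjN]
      have hw12 : ρ1 * V ρ1 (j + 1) ≤ ρ2 * V ρ2 (j + 1) :=
        mul_le_mul h12 (ihm h1 h2 h12) (ihn ρ1 h1) (le_trans h1.1 h12)
      have hcv : 0 ≤ c j - v j := by linarith [hvc j]
      have := step_mono_aux α (c j - v j) hα hcv (hw ρ1 h1) hw12
      have e1 : -α * (2 * ρ1 * V ρ1 (j + 1) + c j - v j + 1 / α) =
          -α * (2 * (ρ1 * V ρ1 (j + 1)) + (c j - v j) + 1 / α) := by ring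
      have e2 : -α * (2 * ρ2 * V ρ2 (j + 1) + c j - v j + 1 / α) =
          -α * (2 * (ρ2 * V ρ2 (j + 1)) + (c j - v j) + 1 / α) := by ring
      rw [e1, e2]
      exact this

/-- Monotonicity of optimal prices in the patience parameter: under any fixed
ranking in the exponential VA model with `vᵢ ≤ cᵢ`, each optimal price
`p*_i(ρ) = cᵢ + 1/α + ρ·V^p_{i+1}(ρ)` is weakly increasing in `ρ ∈ [0,1]`. -/
theorem stmt_16 (N : ℕ) (α : ℝ) (v c : ℕ → ℝ) (hα : 0 < α)
    (hvc : ∀ i, v i ≤ c i)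
    (V : ℝ → ℕ → ℝ) (p : ℝ → ℕ → ℝ)
    (hVN : ∀ ρ ∈ Set.Icc (0 : ℝ) 1,
      V ρ N = (1 / α) * Real.exp (α * (v N - c N) - 1))
    (hVrec : ∀ ρ ∈ Set.Icc (0 : ℝ) 1, ∀ i < N,
      V ρ i = (1 / α) *
          Real.exp (-α * (2 * ρ * V ρ (i + 1) + c i - v i + 1 / α)) +
        ρ * V ρ (i + 1))
    (hp : ∀ ρ ∈ Set.Icc (0 : ℝ) 1, ∀ i < N,
      p ρ i = c i + 1 / α + ρ * V ρ (i + 1))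
    (hpN : ∀ ρ ∈ Set.Icc (0 : ℝ) 1, p ρ N = c N + 1 / α) :
    ∀ i ≤ N, MonotoneOn (fun ρ => p ρ i) (Set.Icc (0 : ℝ) 1) := by
  intro i hi
  rcases eq_or_lt_of_le hi with heq | hlt
  · subst heq
    intro ρ1 h1 ρ2 h2 h12
    simp only [hpN ρ1 h1, hpN ρ2 h2, le_refl]
  · obtain ⟨ihn, ihm⟩ := V_nonneg_mono N α v c hα hvc V hVN hVrec (N - (i + 1))
      (i + 1) (by omega)
    intro ρ1 h1 ρ2 h2 h12
    simp only
    rw [hp ρ1 h1 i hlt, hp ρ2 h2 i hlt]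
    have hw12 : ρ1 * V ρ1 (i + 1) ≤ ρ2 * V ρ2 (i + 1) :=
      mul_le_mul h12 (ihm h1 h2 h12) (ihn ρ1 h1) (le_trans h1.1 h12)
    linarith
end
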